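/- Let π : ℚ^n → ℚ^m be a surjective linear map and Σ a projective quasifan in ℚ^m. Then the pullback collection Σ' = {π⁻¹(σ) : σ ∈ Σ} is a projective quasifan in ℚ^n: if Ψ is a strictly convex piecewise linear function on Σ, then Ψ ∘ π is a strictly convex piecewise linear function on Σ'. -/

import Mathlib

/-- The finitely generated convex cone on a set `T`: all nonnegative rational
combinations of elements of `T`. -/
def ConeGen {V : Type*} [AddCommGroup V] [Module ℚ V] (T : Set V) : Set V :=
  {x | ∃ (s : Finset V) (c : V → ℚ), ↑s ⊆ T ∧ (∀ v, 0 ≤ c v) ∧ x = ∑ v ∈ s, c v • v}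

/-- A (rational) polyhedral cone: the cone generated by finitely many vectors. -/
def IsPolyCone {V : Type*} [AddCommGroup V] [Module ℚ V] (σ : Set V) : Prop :=
  ∃ T : Finset V, σ = ConeGen (↑T : Set V)

/-- A cone is strongly convex if it contains no line. -/
def IsStronglyConvex {V : Type*} [AddCommGroup V] [Module ℚ V] (σ : Set V) : Prop :=
  ∀ x ∈ σ, -x ∈ σ → x = 0

/-- The dimension of a cone: the dimension of its linear span. -/
noncomputable def coneDim {V : Type*} [AddCommGroup V] [Module ℚ V] (σ : Set V) : ℕ :=
  Module.finrank ℚ (Submodule.span ℚ σ)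

/-- `τ` is a face of `σ`: the intersection of `σ` with a supporting hyperplane
(including `σ` itself, via the zero functional). -/
def IsFace {V : Type*} [AddCommGroup V] [Module ℚ V] (σ τ : Set V) : Prop :=
  ∃ m : V →ₗ[ℚ] ℚ, (∀ x ∈ σ, 0 ≤ m x) ∧ τ = σ ∩ {x | m x = 0}

/-- `τ` is a facet of `σ`: a face of dimension one less. -/
def IsFacet {V : Type*} [AddCommGroup V] [Module ℚ V] (σ τ : Set V) : Prop :=
  IsFace σ τ ∧ coneDim τ + 1 = coneDim σ

/-- A quasifan: a finite collection of (not necessarily strongly) convex rational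
polyhedral cones, closed under taking facets, such that the intersection of any two
cones is a face of each. -/
def IsQuasifan {V : Type*} [AddCommGroup V] [Module ℚ V] (F : Set (Set V)) : Prop :=
  F.Finite ∧ (∀ σ ∈ F, IsPolyCone σ) ∧
  (∀ σ ∈ F, ∀ τ, IsFacet σ τ → τ ∈ F) ∧
  (∀ σ ∈ F, ∀ σ' ∈ F, IsFace σ (σ ∩ σ') ∧ IsFace σ' (σ ∩ σ'))

/-- A collection of cones is complete if it covers the whole space. -/
def IsCompleteFan {V : Type*} [AddCommGroup V] [Module ℚ V] (F : Set (Set V)) : Prop :=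
  ⋃₀ F = Set.univ

/-- `Ψ` is piecewise linear with respect to `F`: linear on each cone of `F`. -/
def IsPLOn {V : Type*} [AddCommGroup V] [Module ℚ V] (F : Set (Set V)) (Ψ : V → ℚ) : Prop :=
  ∀ σ ∈ F, ∃ ℓ : V →ₗ[ℚ] ℚ, ∀ x ∈ σ, Ψ x = ℓ x

/-- `Ψ` is a strictly convex piecewise linear function adapted to `F`: it is linear on
each cone, and for each maximal cone the linear piece lies strictly below `Ψ` away
from that cone. -/
def IsStrictlyConvexPLOn {V : Type*} [AddCommGroup V] [Module ℚ V]
    (F : Set (Set V)) (Ψ : V → ℚ) : Prop :=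
  IsPLOn F Ψ ∧ ∀ σ ∈ F, Maximal (· ∈ F) σ →
    ∃ ℓ : V →ₗ[ℚ] ℚ, (∀ x ∈ σ, Ψ x = ℓ x) ∧ ∀ x ∉ σ, ℓ x < Ψ x

/-- A quasifan is projective if it admits a strictly convex piecewise linear function. -/
def IsProjectiveFan {V : Type*} [AddCommGroup V] [Module ℚ V] (F : Set (Set V)) : Prop :=
  ∃ Ψ : V → ℚ, IsStrictlyConvexPLOn F Ψ

/-! Everything is pulled back along the surjection `π`. The preimage of the cone generated by `T`
is generated by a lift of `T` together with `±` generators of `ker π`. Since `ker π` is a linear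
subspace inside `π ⁻¹' σ`, every supporting functional of `π ⁻¹' σ` vanishes on it and hence
factors through `π`, so the faces of `π ⁻¹' σ` are the preimages of the faces of `σ`; all
dimensions shift by `dim ker π`, so facets correspond to facets. The linear pieces of `Ψ ∘ π` are
the `ℓ ∘ π`, and maximal cones and strict inequalities transfer because `π` is surjective. -/

open Module Submodule
open scoped Pointwise

namespace PointedCone

variable {R E F : Type*} [Ring R] [AddCommGroup E] [AddCommGroup F] [Module R E] [Module R F]

lemma ofSubmodule_span_eq_hull_union_neg [LinearOrder R] [IsOrderedRing R] (s : Set E) :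
    (span R s : PointedCone R E) = hull R (s ∪ -s) := by
  set C := hull R (s ∪ -s)
  have hC_neg {x : E} (hx : x ∈ C) : -x ∈ C := by
    have : -x ∈ -C := mem_neg.mpr ((neg_neg x).symm ▸ hx)
    rwa [← span_neg_eq_neg, Set.union_neg, neg_neg, Set.union_comm] at this
  refine le_antisymm (fun x hx => ?_) (span_le.mpr ?_)
  · induction hx using Submodule.span_induction with
    | mem x hx => exact subset_hull (Or.inl hx)
    | zero => exact zero_mem C
    | add x y _ _ hx hy => exact add_mem hx hy
    | smul a x _ hx =>
      rcases le_total 0 a with ha | ha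
      · exact C.smul_mem ha hx
      · rw [← neg_smul_neg]
        exact C.smul_mem (neg_nonneg.mpr ha) (hC_neg hx)
  · rintro x (hx | hx)
    · exact Submodule.subset_span hx
    · simpa using neg_mem (Submodule.subset_span (R := R) hx)

lemma comap_eq_map_sup_ker [PartialOrder R] [IsOrderedRing R] {π : E →ₗ[R] F} {s : F →ₗ[R] E}
    (hs : Function.RightInverse s π) (C : PointedCone R F) :
    C.comap π = C.map s ⊔ ofSubmodule (LinearMap.ker π) := by
  refine le_antisymm (fun x hx => ?_) (sup_le ?_ ?_)
  · refine mem_sup.mpr ⟨s (π x), mem_map.mpr ⟨π x, hx, rfl⟩, x - s (π x), ?_, add_sub_cancel _ _⟩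
    simp [hs (π x)]
  · rintro _ ⟨y, hy, rfl⟩
    simpa [hs y] using hy
  · intro x hx
    simp [LinearMap.mem_ker.mp hx]

end PointedCone

namespace Submodule

variable {K V W : Type*} [DivisionRing K] [AddCommGroup V] [Module K V] [AddCommGroup W]
  [Module K W]

lemma finrank_comap_of_surjective [FiniteDimensional K V] {π : V →ₗ[K] W}
    (hπ : Function.Surjective π) (S : Submodule K W) :
    finrank K (S.comap π) = finrank K S + finrank K (LinearMap.ker π) := by
  have := LinearMap.finrank_range_add_finrank_ker (π.domRestrict (S.comap π))
  rw [LinearMap.range_domRestrict, map_comap_eq_of_surjective hπ, LinearMap.ker_domRestrict,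
    (comapSubtypeEquivOfLe (LinearMap.ker_le_comap π)).finrank_eq] at this
  exact this.symm

end Submodule

section Cones

variable {V W : Type*} [AddCommGroup V] [Module ℚ V] [AddCommGroup W] [Module ℚ W]

lemma coneGen_eq_hull (T : Set V) : ConeGen T = (PointedCone.hull ℚ T : Set V) := by
  classical
  ext x
  rw [SetLike.mem_coe, mem_span_iff_exists_finset_subset]
  constructor
  · rintro ⟨s, c, hsT, hc, rfl⟩
    refine ⟨fun v => if v ∈ s then ⟨c v, hc v⟩ else 0, s, hsT, fun v hv => ?_,
      Finset.sum_congr rfl fun v hv => by simp [hv]⟩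
    by_contra h
    simp_all
  · rintro ⟨c, s, hsT, -, rfl⟩
    exact ⟨s, fun v => c v, hsT, fun v => (c v).2, rfl⟩

lemma IsPolyCone.zero_mem {σ : Set V} (hσ : IsPolyCone σ) : (0 : V) ∈ σ := by
  obtain ⟨T, rfl⟩ := hσ
  rw [coneGen_eq_hull]
  exact Submodule.zero_mem _

lemma IsPolyCone.preimage [FiniteDimensional ℚ V] {π : V →ₗ[ℚ] W} (hπ : Function.Surjective π)
    {σ : Set W} (hσ : IsPolyCone σ) : IsPolyCone (π ⁻¹' σ) := by
  classical
  obtain ⟨T, rfl⟩ := hσ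
  obtain ⟨s, hs⟩ := π.exists_rightInverse_of_surjective (LinearMap.range_eq_top.mpr hπ)
  obtain ⟨K, hK⟩ := IsNoetherian.noetherian (LinearMap.ker π)
  refine ⟨T.image s ∪ (K ∪ -K), ?_⟩
  rw [coneGen_eq_hull, coneGen_eq_hull, ← PointedCone.coe_comap,
    PointedCone.comap_eq_map_sup_ker (LinearMap.congr_fun hs), ← hK,
    PointedCone.ofSubmodule_span_eq_hull_union_neg, PointedCone.map, map_span, ← span_union]
  simp

lemma coneDim_preimage [FiniteDimensional ℚ V] {π : V →ₗ[ℚ] W} (hπ : Function.Surjective π)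
    {σ : Set W} (hσ : σ.Nonempty) :
    coneDim (π ⁻¹' σ) = coneDim σ + finrank ℚ (LinearMap.ker π) := by
  rw [coneDim, coneDim, span_preimage_eq hσ (by simp [LinearMap.range_eq_top_of_surjective π hπ]),
    finrank_comap_of_surjective hπ]

lemma IsFace.zero_mem {σ τ : Set V} (h : IsFace σ τ) (hσ : (0 : V) ∈ σ) : (0 : V) ∈ τ := by
  obtain ⟨m, -, rfl⟩ := h
  exact ⟨hσ, map_zero m⟩

lemma IsFace.preimage {σ τ : Set W} (h : IsFace σ τ) (π : V →ₗ[ℚ] W) :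
    IsFace (π ⁻¹' σ) (π ⁻¹' τ) := by
  obtain ⟨m, hm, rfl⟩ := h
  exact ⟨m ∘ₗ π, fun x hx => hm _ hx, rfl⟩

lemma IsFace.exists_eq_preimage {π : V →ₗ[ℚ] W} (hπ : Function.Surjective π) {σ : Set W}
    (hσ : (0 : W) ∈ σ) {τ' : Set V} (h : IsFace (π ⁻¹' σ) τ') :
    ∃ τ, IsFace σ τ ∧ τ' = π ⁻¹' τ := by
  obtain ⟨m, hm, rfl⟩ := h
  have hker : m ∈ (LinearMap.ker π).dualAnnihilator := by
    refine (mem_dualAnnihilator m).mpr fun k hk => le_antisymm ?_ (hm k ?_)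
    · simpa using hm (-k) (by simpa [LinearMap.mem_ker.mp hk] using hσ)
    · simpa [LinearMap.mem_ker.mp hk] using hσ
  rw [← LinearMap.range_dualMap_eq_dualAnnihilator_ker] at hker
  obtain ⟨m', rfl⟩ := hker
  refine ⟨σ ∩ {y | m' y = 0}, ⟨m', fun y hy => ?_, rfl⟩, rfl⟩
  obtain ⟨x, rfl⟩ := hπ y
  exact hm x hy

lemma IsFacet.exists_eq_preimage [FiniteDimensional ℚ V] {π : V →ₗ[ℚ] W}
    (hπ : Function.Surjective π) {σ : Set W} (hσ : (0 : W) ∈ σ) {τ' : Set V}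
    (h : IsFacet (π ⁻¹' σ) τ') : ∃ τ, IsFacet σ τ ∧ τ' = π ⁻¹' τ := by
  obtain ⟨hface, hdim⟩ := h
  obtain ⟨τ, hτ, rfl⟩ := hface.exists_eq_preimage hπ hσ
  rw [coneDim_preimage hπ ⟨0, hσ⟩, coneDim_preimage hπ ⟨0, hτ.zero_mem hσ⟩] at hdim
  exact ⟨τ, ⟨hτ, by omega⟩, rfl⟩

end Cones

section Pullback

variable {V W : Type*} [AddCommGroup V] [Module ℚ V] [AddCommGroup W] [Module ℚ W]
  {π : V →ₗ[ℚ] W} {F : Set (Set W)}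

def pullbackFan (π : V →ₗ[ℚ] W) (F : Set (Set W)) : Set (Set V) :=
  {τ | ∃ σ ∈ F, τ = π ⁻¹' σ}

lemma IsQuasifan.pullback [FiniteDimensional ℚ V] (hπ : Function.Surjective π)
    (hF : IsQuasifan F) : IsQuasifan (pullbackFan π F) := by
  obtain ⟨hfin, hpoly, hfacet, hinter⟩ := hF
  refine ⟨?_, ?_, ?_, ?_⟩
  · convert hfin.image (π ⁻¹' ·) using 1
    ext τ
    simp [pullbackFan, eq_comm]
  · rintro _ ⟨σ, hσ, rfl⟩
    exact (hpoly σ hσ).preimage hπ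
  · rintro _ ⟨σ, hσ, rfl⟩ τ' hτ'
    obtain ⟨τ, hτ, rfl⟩ := hτ'.exists_eq_preimage hπ (hpoly σ hσ).zero_mem
    exact ⟨τ, hfacet σ hσ τ hτ, rfl⟩
  · rintro _ ⟨σ, hσ, rfl⟩ _ ⟨σ', hσ', rfl⟩
    rw [← Set.preimage_inter]
    exact ⟨(hinter σ hσ σ' hσ').1.preimage π, (hinter σ hσ σ' hσ').2.preimage π⟩

lemma IsPLOn.pullback {Ψ : W → ℚ} (h : IsPLOn F Ψ) (π : V →ₗ[ℚ] W) :
    IsPLOn (pullbackFan π F) (Ψ ∘ π) := by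
  rintro _ ⟨σ, hσ, rfl⟩
  obtain ⟨ℓ, hℓ⟩ := h σ hσ
  exact ⟨ℓ ∘ₗ π, fun x hx => hℓ (π x) hx⟩

lemma maximal_of_maximal_preimage (hπ : Function.Surjective π) {σ : Set W} (hσ : σ ∈ F)
    (hmax : Maximal (· ∈ pullbackFan π F) (π ⁻¹' σ)) : Maximal (· ∈ F) σ :=
  ⟨hσ, fun σ' hσ' hle =>
    hπ.preimage_subset_preimage_iff.mp (hmax.2 ⟨σ', hσ', rfl⟩ (Set.preimage_mono hle))⟩

lemma IsStrictlyConvexPLOn.pullback (hπ : Function.Surjective π) {Ψ : W → ℚ}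
    (h : IsStrictlyConvexPLOn F Ψ) : IsStrictlyConvexPLOn (pullbackFan π F) (Ψ ∘ π) := by
  refine ⟨h.1.pullback π, ?_⟩
  rintro _ ⟨σ, hσ, rfl⟩ hmax
  obtain ⟨ℓ, hℓ, hlt⟩ := h.2 σ hσ (maximal_of_maximal_preimage hπ hσ hmax)
  exact ⟨ℓ ∘ₗ π, fun x hx => hℓ (π x) hx, fun x hx => hlt (π x) hx⟩

lemma IsProjectiveFan.pullback (hπ : Function.Surjective π) (h : IsProjectiveFan F) :
    IsProjectiveFan (pullbackFan π F) :=
  let ⟨Ψ, hΨ⟩ := h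
  ⟨Ψ ∘ π, hΨ.pullback hπ⟩

end Pullback

/-- The pullback of a projective quasifan along a surjective linear map is a projective
quasifan: if `Ψ` is strictly convex piecewise linear on `F`, then `Ψ ∘ π` is strictly
convex piecewise linear on the pullback collection `{π⁻¹(σ) : σ ∈ F}`. -/
theorem pullback_of_projective_quasifan {n m : ℕ}
    (π : (Fin n → ℚ) →ₗ[ℚ] (Fin m → ℚ)) (hπ : Function.Surjective π)
    (F : Set (Set (Fin m → ℚ))) (hF : IsQuasifan F) (hproj : IsProjectiveFan F) :
    IsQuasifan {τ | ∃ σ ∈ F, τ = π ⁻¹' σ} ∧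
    (∀ Ψ : (Fin m → ℚ) → ℚ, IsStrictlyConvexPLOn F Ψ →
      IsStrictlyConvexPLOn {τ | ∃ σ ∈ F, τ = π ⁻¹' σ} (Ψ ∘ π)) ∧
    IsProjectiveFan {τ | ∃ σ ∈ F, τ = π ⁻¹' σ} :=
  ⟨hF.pullback hπ, fun _ hΨ => hΨ.pullback hπ, hproj.pullback hπ⟩
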